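/- Let G be an indiscriminate linear influence game: there are nonzero reals δ_1, …, δ_n, all of the same sign ρ ∈ {−1,1} (ρ·δ_i > 0 for all i), such that w_{ij} = δ_i for every j ≠ i, and let Φ(x) = ρ·[(Σ_{i=1}^n δ_i x_i)² − 2·Σ_{i=1}^n b_i δ_i x_i]. Then every global maximizer x* of Φ over {−1,1}^n is a pure-strategy Nash equilibrium of G; in particular, every indiscriminate LIG has at least one pure-strategy Nash equilibrium. -/

import Mathlib

/-!
Φ is an exact potential of the game: flipping the action of player `i` changes Φ by
`4 ρ δ_i · x_i (Σ_{j ≠ i} δ_j x_j - b_i)`, the positive factor `4 ρ δ_i` times player `i`'s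
payoff at `x`. At a maximizer of Φ no flip increases it, so every payoff is nonnegative; a
maximizer exists because `{-1,1}^n` is finite.
-/

open Finset

variable {ι : Type*}

def IsSignVector (x : ι → ℝ) : Prop :=
  ∀ i, x i = 1 ∨ x i = -1

theorem IsSignVector.update_neg [DecidableEq ι] {x : ι → ℝ} (hx : IsSignVector x) (i : ι) :
    IsSignVector (Function.update x i (-x i)) := by
  intro j
  rcases eq_or_ne j i with rfl | hji
  · rw [Function.update_self]
    rcases hx j with h | h <;> simp [h]
  · rw [Function.update_of_ne hji]
    exact hx j

theorem exists_isSignVector_forall_le [Finite ι] (f : (ι → ℝ) → ℝ) :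
    ∃ x, IsSignVector x ∧ ∀ y, IsSignVector y → f y ≤ f x := by
  have hfin : (Set.univ.pi fun _ : ι => ({1, -1} : Set ℝ)).Finite :=
    Set.Finite.pi fun _ => Set.toFinite _
  obtain ⟨x, hx, hmax⟩ := Set.exists_max_image _ f hfin ⟨fun _ => 1, by simp⟩
  exact ⟨x, by simpa [IsSignVector] using hx, fun y hy => hmax y (by simpa [IsSignVector] using hy)⟩

section LinearInfluenceGame

variable [Fintype ι] [DecidableEq ι]

def IsPSNE (w : ι → ι → ℝ) (b x : ι → ℝ) : Prop :=
  ∀ i, 0 ≤ x i * (∑ k ∈ univ.filter (· ≠ i), w k i * x k - b i)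

theorem sum_mul_update (c x : ι → ℝ) (i : ι) (v : ℝ) :
    ∑ j, c j * Function.update x i v j = ∑ j, c j * x j + c i * (v - x i) := by
  rw [← add_sum_erase _ _ (mem_univ i), ← add_sum_erase _ _ (mem_univ i), Function.update_self,
    sum_congr rfl fun j hj => by rw [Function.update_of_ne (ne_of_mem_erase hj)]]
  ring

theorem sum_filter_ne_eq_sub_of_indiscriminate {w : ι → ι → ℝ} {δ : ι → ℝ}
    (hw : ∀ i j, j ≠ i → w i j = δ i) (x : ι → ℝ) (i : ι) :
    ∑ k ∈ univ.filter (· ≠ i), w k i * x k = ∑ j, δ j * x j - δ i * x i := by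
  rw [filter_ne', sum_congr rfl fun k hk => by rw [hw k i (ne_of_mem_erase hk).symm],
    sum_erase_eq_sub (mem_univ i)]

def indiscriminatePotential (δ b : ι → ℝ) (ρ : ℝ) (y : ι → ℝ) : ℝ :=
  ρ * ((∑ i, δ i * y i) ^ 2 - 2 * ∑ i, b i * δ i * y i)

theorem indiscriminatePotential_sub_update_neg (δ b : ι → ℝ) (ρ : ℝ) (x : ι → ℝ) (i : ι) :
    indiscriminatePotential δ b ρ x - indiscriminatePotential δ b ρ (Function.update x i (-x i)) =
      4 * (ρ * δ i) * (x i * (∑ j, δ j * x j - δ i * x i - b i)) := by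
  simp only [indiscriminatePotential, sum_mul_update]
  ring

theorem isPSNE_of_forall_indiscriminatePotential_le {w : ι → ι → ℝ} {δ b : ι → ℝ} {ρ : ℝ}
    (hδ : ∀ i, 0 < ρ * δ i) (hw : ∀ i j, j ≠ i → w i j = δ i) {x : ι → ℝ}
    (hx : IsSignVector x)
    (hmax : ∀ y, IsSignVector y →
      indiscriminatePotential δ b ρ y ≤ indiscriminatePotential δ b ρ x) :
    IsPSNE w b x := by
  intro i
  have hflip := sub_nonneg.mpr (hmax _ (hx.update_neg i))
  rw [indiscriminatePotential_sub_update_neg] at hflip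
  rw [sum_filter_ne_eq_sub_of_indiscriminate hw]
  exact nonneg_of_mul_nonneg_right hflip (mul_pos four_pos (hδ i))

end LinearInfluenceGame

theorem indiscriminate_lig_maximizer_psne (n : ℕ)
    (w : Fin n → Fin n → ℝ) (δ : Fin n → ℝ) (b : Fin n → ℝ) (ρ : ℝ)
    (hδ : ∀ i, ρ * δ i > 0)
    (hw : ∀ i j : Fin n, j ≠ i → w i j = δ i) :
    let Φ : (Fin n → ℝ) → ℝ := fun y =>
      ρ * ((∑ i, δ i * y i) ^ 2 - 2 * ∑ i, b i * δ i * y i)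
    (∀ x : Fin n → ℝ, (∀ i, x i = 1 ∨ x i = -1) →
        (∀ y : Fin n → ℝ, (∀ i, y i = 1 ∨ y i = -1) → Φ y ≤ Φ x) →
        ∀ i, x i * ((∑ k ∈ univ.filter (· ≠ i), w k i * x k) - b i) ≥ 0) ∧
    (∃ x : Fin n → ℝ, (∀ i, x i = 1 ∨ x i = -1) ∧
        ∀ i, x i * ((∑ k ∈ univ.filter (· ≠ i), w k i * x k) - b i) ≥ 0) := by
  intro Φ
  have maximizer_isPSNE : ∀ x, IsSignVector x → (∀ y, IsSignVector y → Φ y ≤ Φ x) →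
      IsPSNE w b x :=
    fun _ hx hmax => isPSNE_of_forall_indiscriminatePotential_le hδ hw hx hmax
  obtain ⟨x, hx, hmax⟩ := exists_isSignVector_forall_le Φ
  exact ⟨maximizer_isPSNE, x, hx, maximizer_isPSNE x hx hmax⟩
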